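/- arXiv:2411.04108 — 4 statements merged into one kernel-verified Lean document; each statement's English description precedes it below -/
import Mathlib

section
/- Let X be a Banach space of Rademacher type 2 with type constant C_X, and let 𝔻 ⊂ X be a dictionary with K := sup_{g ∈ 𝔻} ‖g‖_X < ∞. Then for every f in the variation space K₁(𝔻) and every N ∈ ℕ, inf_{f_N ∈ Σ_{N,M}(𝔻)} ‖f − f_N‖_X ≤ 4 C_X K ‖f‖_{K₁(𝔻)} N^{−1/2}, where M = ‖f‖_{K₁(𝔻)}. -/
open MeasureTheory Real

noncomputable section

/-- The closed symmetric convex hull of a dictionary. -/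
def symHull {X : Type*} [NormedAddCommGroup X] [NormedSpace ℝ X] (D : Set X) : Set X :=
  closure (convexHull ℝ (D ∪ (fun g => -g) '' D))

/-- The variation norm of `f` with respect to the dictionary `D`. -/
def varNorm {X : Type*} [NormedAddCommGroup X] [NormedSpace ℝ X] (D : Set X) (f : X) : ℝ :=
  sInf {t : ℝ | 0 < t ∧ t⁻¹ • f ∈ symHull D}

section MaureyAux

variable {X : Type*} [NormedAddCommGroup X] [NormedSpace ℝ X]

/-- Scalar marginalization identity for a product measure on `Fin N → ι`. -/
lemma maurey_marg {ι : Type*} [Fintype ι] {N : ℕ} (lam : ι → ℝ)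
    (hsum : ∑ j, lam j = 1) (k₀ : Fin N) (u : ι → ℝ) :
    ∑ i : Fin N → ι, (∏ k, lam (i k)) * u (i k₀) = ∑ j, lam j * u j := by
  classical
  have key : (∏ k : Fin N, ∑ j, lam j * (if k = k₀ then u j else 1))
      = ∑ i : Fin N → ι, ∏ k, (lam (i k) * (if k = k₀ then u (i k) else 1)) := by
    rw [Finset.prod_univ_sum]
    rw [Fintype.piFinset_univ]
  have lhs_eq : ∀ i : Fin N → ι,
      (∏ k, (lam (i k) * (if k = k₀ then u (i k) else 1)))
        = (∏ k, lam (i k)) * u (i k₀) := by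
    intro i
    rw [Finset.prod_mul_distrib]
    congr 1
    rw [Finset.prod_ite_eq' Finset.univ k₀ (fun k => u (i k))]
    simp
  have rhs_eq : (∏ k : Fin N, ∑ j, lam j * (if k = k₀ then u j else 1))
      = ∑ j, lam j * u j := by
    have : ∀ k : Fin N, (∑ j, lam j * (if k = k₀ then u j else 1))
        = (if k = k₀ then (∑ j, lam j * u j) else 1) := by
      intro k
      by_cases h : k = k₀ <;> simp [h, hsum]
    rw [Finset.prod_congr rfl (fun k _ => this k)]
    rw [Finset.prod_ite_eq' Finset.univ k₀ (fun _ => ∑ j, lam j * u j)]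
    simp
  calc ∑ i : Fin N → ι, (∏ k, lam (i k)) * u (i k₀)
      = ∑ i : Fin N → ι, ∏ k, (lam (i k) * (if k = k₀ then u (i k) else 1)) :=
        Finset.sum_congr rfl fun i _ => (lhs_eq i).symm
    _ = ∏ k : Fin N, ∑ j, lam j * (if k = k₀ then u j else 1) := key.symm
    _ = ∑ j, lam j * u j := rhs_eq

/-- The product weights sum to one. -/
lemma maurey_margP {ι : Type*} [Fintype ι] {N : ℕ} (lam : ι → ℝ)
    (hsum : ∑ j, lam j = 1) (hN : 0 < N) :
    ∑ i : Fin N → ι, (∏ k, lam (i k)) = 1 := by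
  have := maurey_marg lam hsum ⟨0, hN⟩ (fun _ => (1 : ℝ))
  simpa [hsum] using this

/-- Vector-valued marginalization identity. -/
lemma maurey_marg_vec {ι : Type*} [Fintype ι] {N : ℕ} (lam : ι → ℝ)
    (hsum : ∑ j, lam j = 1) (k₀ : Fin N) (z : ι → X) :
    ∑ i : Fin N → ι, (∏ k, lam (i k)) • z (i k₀) = ∑ j, lam j • z j := by
  classical
  have step1 : ∀ i : Fin N → ι, (∏ k, lam (i k)) • z (i k₀)
      = ∑ j, (if i k₀ = j then (∏ k, lam (i k)) else 0) • z j := by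
    intro i
    have h' : ∀ j, (if i k₀ = j then (∏ k, lam (i k)) else 0) • z j
        = if i k₀ = j then (∏ k, lam (i k)) • z j else 0 := by
      intro j
      split <;> simp
    rw [Finset.sum_congr rfl fun j _ => h' j, Finset.sum_ite_eq]
    simp
  calc ∑ i : Fin N → ι, (∏ k, lam (i k)) • z (i k₀)
      = ∑ i : Fin N → ι, ∑ j, (if i k₀ = j then (∏ k, lam (i k)) else 0) • z j :=
        Finset.sum_congr rfl fun i _ => step1 i
    _ = ∑ j, ∑ i : Fin N → ι, (if i k₀ = j then (∏ k, lam (i k)) else 0) • z j :=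
        Finset.sum_comm
    _ = ∑ j, (∑ i : Fin N → ι, (if i k₀ = j then (∏ k, lam (i k)) else 0)) • z j := by
        refine Finset.sum_congr rfl fun j _ => ?_
        rw [Finset.sum_smul]
    _ = ∑ j, lam j • z j := by
        refine Finset.sum_congr rfl fun j _ => ?_
        congr 1
        have := maurey_marg lam hsum k₀ (fun j' => if j' = j then (1 : ℝ) else 0)
        simp only [mul_ite, mul_one, mul_zero] at this
        rw [this]
        simp [Finset.sum_ite_eq]

/-- Mean is at most the square root of the mean of squares (Cauchy–Schwarz). -/
lemma maurey_mean_le {α : Type*} [Fintype α] (w : ℝ) (hw : 0 ≤ w)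
    (hsum : ∑ _x : α, w = 1) (a : α → ℝ) (ha : ∀ x, 0 ≤ a x) :
    ∑ x, w * a x ≤ (∑ x, w * a x ^ 2) ^ ((1 : ℝ) / 2) := by
  rw [← Real.sqrt_eq_rpow]
  have h0 : 0 ≤ ∑ x, w * a x :=
    Finset.sum_nonneg fun x _ => mul_nonneg hw (ha x)
  have h2 : 0 ≤ ∑ x, w * a x ^ 2 :=
    Finset.sum_nonneg fun x _ => mul_nonneg hw (sq_nonneg _)
  rw [Real.le_sqrt h0 h2]
  have hcs := Finset.sum_mul_sq_le_sq_mul_sq Finset.univ (fun _ : α => Real.sqrt w)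
    (fun x => Real.sqrt w * a x)
  have he1 : ∀ x : α, Real.sqrt w * (Real.sqrt w * a x) = w * a x := by
    intro x
    rw [← mul_assoc, Real.mul_self_sqrt hw]
  have he2 : ∀ x : α, (Real.sqrt w) ^ 2 = w := fun _ => Real.sq_sqrt hw
  have he3 : ∀ x : α, (Real.sqrt w * a x) ^ 2 = w * a x ^ 2 := by
    intro x
    rw [mul_pow, Real.sq_sqrt hw]
  calc (∑ x, w * a x) ^ 2
      = (∑ x, Real.sqrt w * (Real.sqrt w * a x)) ^ 2 := by
        rw [Finset.sum_congr rfl fun x _ => (he1 x).symm]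
    _ ≤ (∑ _x : α, (Real.sqrt w) ^ 2) * ∑ x, (Real.sqrt w * a x) ^ 2 := hcs
    _ = (∑ _x : α, w) * ∑ x, w * a x ^ 2 := by
        rw [Finset.sum_congr rfl fun x _ => he2 x, Finset.sum_congr rfl fun x _ => he3 x]
    _ = ∑ x, w * a x ^ 2 := by rw [hsum, one_mul]

end MaureyAux

section MaureyCore

variable {X : Type*} [NormedAddCommGroup X] [NormedSpace ℝ X]

/-- Core of Maurey's sampling argument: given a convex combination of dictionary
elements bounded by `K`, there is an equal-weight sample of size `N` approximating it
to accuracy `2CK/√N`. -/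
lemma maurey_core (C K : ℝ) (hC : 0 ≤ C) (hK : 0 ≤ K) {N : ℕ} (hN : 0 < N)
    (htype2 : ∀ f : Fin N → X,
      (∑ σ : Fin N → Bool, ((2 : ℝ) ^ N)⁻¹ *
          ‖∑ i, (if σ i then (1 : ℝ) else -1) • f i‖ ^ 2) ^ ((1 : ℝ) / 2) ≤
        C * (∑ i, ‖f i‖ ^ 2) ^ ((1 : ℝ) / 2))
    {ι : Type*} [Fintype ι] (lam : ι → ℝ) (z : ι → X)
    (hlam : ∀ j, 0 ≤ lam j) (hsum : ∑ j, lam j = 1) (hz : ∀ j, ‖z j‖ ≤ K) :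
    ∃ i : Fin N → ι, ‖(∑ j, lam j • z j) - (N : ℝ)⁻¹ • ∑ k, z (i k)‖ ≤
      2 * C * K / Real.sqrt N := by
  classical
  set c : X := ∑ j, lam j • z j with hc
  set P : (Fin N → ι) → ℝ := fun i => ∏ k, lam (i k) with hP
  have hP0 : ∀ i, 0 ≤ P i := fun i => Finset.prod_nonneg fun k _ => hlam (i k)
  have hP1 : ∑ i : Fin N → ι, P i = 1 := maurey_margP lam hsum hN
  set S : (Fin N → ι) → X := fun i => ∑ k, z (i k) with hS
  set B : ℝ := 2 * C * K * Real.sqrt N with hB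
  have hsqN : (0 : ℝ) < Real.sqrt N := Real.sqrt_pos.mpr (by exact_mod_cast hN)
  -- the expectation of S is N • c
  have hSc : ∑ i : Fin N → ι, P i • S i = (N : ℝ) • c := by
    calc ∑ i : Fin N → ι, P i • S i
        = ∑ i : Fin N → ι, ∑ k, P i • z (i k) := by
          refine Finset.sum_congr rfl fun i _ => ?_
          rw [Finset.smul_sum]
      _ = ∑ k : Fin N, ∑ i : Fin N → ι, P i • z (i k) := Finset.sum_comm
      _ = ∑ _k : Fin N, c := Finset.sum_congr rfl fun k _ => maurey_marg_vec lam hsum k z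
      _ = (N : ℝ) • c := by
          rw [Finset.sum_const]
          simp [Nat.cast_smul_eq_nsmul ℝ]
  -- Jensen step
  have step1 : ∀ i : Fin N → ι,
      ‖(N : ℝ) • c - S i‖ ≤ ∑ i' : Fin N → ι, P i' * ‖S i' - S i‖ := by
    intro i
    have : (N : ℝ) • c - S i = ∑ i' : Fin N → ι, P i' • (S i' - S i) := by
      rw [Finset.sum_congr rfl fun i' _ => smul_sub (P i') (S i') (S i)]
      rw [Finset.sum_sub_distrib, ← Finset.sum_smul, hP1, one_smul, hSc]
    rw [this]
    refine (norm_sum_le _ _).trans ?_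
    refine Finset.sum_le_sum fun i' _ => ?_
    rw [norm_smul, Real.norm_eq_abs, abs_of_nonneg (hP0 i')]
  -- symmetrization: for every sign pattern the double sum is invariant
  have hswap : ∀ σ : Fin N → Bool,
      (∑ p : (Fin N → ι) × (Fin N → ι), P p.1 * P p.2 * ‖S p.2 - S p.1‖)
      = ∑ p : (Fin N → ι) × (Fin N → ι), P p.1 * P p.2 *
          ‖∑ k, (if σ k then (1 : ℝ) else -1) • (z (p.2 k) - z (p.1 k))‖ := by
    intro σ
    have hinv : Function.Involutive
        (fun p : (Fin N → ι) × (Fin N → ι) =>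
          ((fun k => if σ k then p.1 k else p.2 k, fun k => if σ k then p.2 k else p.1 k) :
            (Fin N → ι) × (Fin N → ι))) := by
      intro p
      refine Prod.ext ?_ ?_ <;> funext k <;> by_cases h : σ k <;> simp [h]
    refine Fintype.sum_equiv hinv.toPerm _ _ fun p => ?_
    have hPP : P (fun k => if σ k then p.1 k else p.2 k) *
        P (fun k => if σ k then p.2 k else p.1 k) = P p.1 * P p.2 := by
      simp only [hP]
      rw [← Finset.prod_mul_distrib, ← Finset.prod_mul_distrib]
      refine Finset.prod_congr rfl fun k _ => ?_
      by_cases h : σ k <;> simp [h, mul_comm]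
    have hvec : ∑ k, (if σ k then (1 : ℝ) else -1) •
        (z (if σ k then p.2 k else p.1 k) - z (if σ k then p.1 k else p.2 k))
        = S p.2 - S p.1 := by
      have : ∀ k : Fin N, (if σ k then (1 : ℝ) else -1) •
          (z (if σ k then p.2 k else p.1 k) - z (if σ k then p.1 k else p.2 k))
          = z (p.2 k) - z (p.1 k) := by
        intro k
        by_cases h : σ k <;> simp [h, neg_sub]
      rw [Finset.sum_congr rfl fun k _ => this k, Finset.sum_sub_distrib]
    show P p.1 * P p.2 * ‖S p.2 - S p.1‖ = _
    rw [Function.Involutive.coe_toPerm]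
    simp only
    rw [hPP, hvec]
  -- expectation bound
  have hEbound : ∑ i : Fin N → ι, P i * ‖(N : ℝ) • c - S i‖ ≤ B := by
    have hA : ∑ i : Fin N → ι, P i * ‖(N : ℝ) • c - S i‖ ≤
        ∑ p : (Fin N → ι) × (Fin N → ι), P p.1 * P p.2 * ‖S p.2 - S p.1‖ := by
      rw [Fintype.sum_prod_type]
      refine Finset.sum_le_sum fun i _ => ?_
      calc P i * ‖(N : ℝ) • c - S i‖
          ≤ P i * ∑ i' : Fin N → ι, P i' * ‖S i' - S i‖ :=
            mul_le_mul_of_nonneg_left (step1 i) (hP0 i)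
        _ = ∑ i' : Fin N → ι, P i * P i' * ‖S i' - S i‖ := by
            rw [Finset.mul_sum]
            refine Finset.sum_congr rfl fun i' _ => by ring
        _ = ∑ i' : Fin N → ι, P i * P i' * ‖S i' - S i‖ := rfl
    refine hA.trans ?_
    -- average over signs
    have hw1 : ∑ _σ : Fin N → Bool, ((2 : ℝ) ^ N)⁻¹ = 1 := by
      rw [Finset.sum_const]
      simp [Finset.card_univ]
    have havg : (∑ p : (Fin N → ι) × (Fin N → ι), P p.1 * P p.2 * ‖S p.2 - S p.1‖)
        = ∑ p : (Fin N → ι) × (Fin N → ι), P p.1 * P p.2 *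
            (∑ σ : Fin N → Bool, ((2 : ℝ) ^ N)⁻¹ *
              ‖∑ k, (if σ k then (1 : ℝ) else -1) • (z (p.2 k) - z (p.1 k))‖) := by
      calc (∑ p : (Fin N → ι) × (Fin N → ι), P p.1 * P p.2 * ‖S p.2 - S p.1‖)
          = ∑ σ : Fin N → Bool, ((2 : ℝ) ^ N)⁻¹ *
              (∑ p : (Fin N → ι) × (Fin N → ι), P p.1 * P p.2 * ‖S p.2 - S p.1‖) := by
            rw [← Finset.sum_mul, hw1, one_mul]
        _ = ∑ σ : Fin N → Bool, ((2 : ℝ) ^ N)⁻¹ *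
              (∑ p : (Fin N → ι) × (Fin N → ι), P p.1 * P p.2 *
                ‖∑ k, (if σ k then (1 : ℝ) else -1) • (z (p.2 k) - z (p.1 k))‖) := by
            refine Finset.sum_congr rfl fun σ _ => ?_
            rw [hswap σ]
        _ = ∑ p : (Fin N → ι) × (Fin N → ι), ∑ σ : Fin N → Bool,
              ((2 : ℝ) ^ N)⁻¹ * (P p.1 * P p.2 *
                ‖∑ k, (if σ k then (1 : ℝ) else -1) • (z (p.2 k) - z (p.1 k))‖) := by
            rw [Finset.sum_comm]
            refine Finset.sum_congr rfl fun σ _ => ?_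
            rw [Finset.mul_sum]
        _ = ∑ p : (Fin N → ι) × (Fin N → ι), P p.1 * P p.2 *
              (∑ σ : Fin N → Bool, ((2 : ℝ) ^ N)⁻¹ *
                ‖∑ k, (if σ k then (1 : ℝ) else -1) • (z (p.2 k) - z (p.1 k))‖) := by
            refine Finset.sum_congr rfl fun p _ => ?_
            rw [Finset.mul_sum]
            refine Finset.sum_congr rfl fun σ _ => by ring
    rw [havg]
    -- pointwise bound via type 2
    have hpt : ∀ p : (Fin N → ι) × (Fin N → ι),
        (∑ σ : Fin N → Bool, ((2 : ℝ) ^ N)⁻¹ *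
          ‖∑ k, (if σ k then (1 : ℝ) else -1) • (z (p.2 k) - z (p.1 k))‖) ≤ B := by
      intro p
      have hmean := maurey_mean_le (α := Fin N → Bool) ((2 : ℝ) ^ N)⁻¹
        (by positivity) hw1
        (fun σ => ‖∑ k, (if σ k then (1 : ℝ) else -1) • (z (p.2 k) - z (p.1 k))‖)
        (fun σ => norm_nonneg _)
      refine hmean.trans ?_
      refine (htype2 (fun k => z (p.2 k) - z (p.1 k))).trans ?_
      have hsumsq : (∑ k : Fin N, ‖z (p.2 k) - z (p.1 k)‖ ^ 2) ≤ (N : ℝ) * (2 * K) ^ 2 := by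
        calc (∑ k : Fin N, ‖z (p.2 k) - z (p.1 k)‖ ^ 2)
            ≤ ∑ _k : Fin N, (2 * K) ^ 2 := by
              refine Finset.sum_le_sum fun k _ => ?_
              have h1 : ‖z (p.2 k) - z (p.1 k)‖ ≤ 2 * K := by
                refine (norm_sub_le _ _).trans ?_
                have := hz (p.2 k)
                have := hz (p.1 k)
                linarith
              exact pow_le_pow_left₀ (norm_nonneg _) h1 2
          _ = (N : ℝ) * (2 * K) ^ 2 := by
              rw [Finset.sum_const]
              simp [nsmul_eq_mul]
      have hrpow : ((N : ℝ) * (2 * K) ^ 2) ^ ((1 : ℝ) / 2) = Real.sqrt N * (2 * K) := by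
        rw [← Real.sqrt_eq_rpow, Real.sqrt_mul (Nat.cast_nonneg N),
          Real.sqrt_sq (by positivity)]
      calc C * (∑ k : Fin N, ‖z (p.2 k) - z (p.1 k)‖ ^ 2) ^ ((1 : ℝ) / 2)
          ≤ C * ((N : ℝ) * (2 * K) ^ 2) ^ ((1 : ℝ) / 2) := by
            refine mul_le_mul_of_nonneg_left ?_ hC
            exact Real.rpow_le_rpow (Finset.sum_nonneg fun k _ => sq_nonneg _) hsumsq
              (by norm_num)
        _ = B := by rw [hrpow, hB]; ring
    calc (∑ p : (Fin N → ι) × (Fin N → ι), P p.1 * P p.2 *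
            (∑ σ : Fin N → Bool, ((2 : ℝ) ^ N)⁻¹ *
              ‖∑ k, (if σ k then (1 : ℝ) else -1) • (z (p.2 k) - z (p.1 k))‖))
        ≤ ∑ p : (Fin N → ι) × (Fin N → ι), P p.1 * P p.2 * B := by
          refine Finset.sum_le_sum fun p _ => ?_
          exact mul_le_mul_of_nonneg_left (hpt p) (mul_nonneg (hP0 p.1) (hP0 p.2))
      _ = B := by
          rw [← Finset.sum_mul]
          rw [Fintype.sum_prod_type]
          have : (∑ i : Fin N → ι, ∑ i' : Fin N → ι, P i * P i') = 1 := by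
            have : ∀ i : Fin N → ι, (∑ i' : Fin N → ι, P i * P i') = P i := by
              intro i
              rw [← Finset.mul_sum, hP1, mul_one]
            rw [Finset.sum_congr rfl fun i _ => this i, hP1]
          rw [this, one_mul]
  -- existence of a good sample
  have hexist : ∃ i : Fin N → ι, ‖(N : ℝ) • c - S i‖ ≤ B := by
    by_contra h
    push_neg at h
    obtain ⟨i₀, hi₀⟩ := Finset.exists_ne_zero_of_sum_ne_zero
      (hP1.symm ▸ (one_ne_zero : (1 : ℝ) ≠ 0))
    have hi₀pos : 0 < P i₀ := lt_of_le_of_ne (hP0 i₀) (Ne.symm hi₀.2)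
    have hlt : B < ∑ i : Fin N → ι, P i * ‖(N : ℝ) • c - S i‖ := by
      have hB' : B = ∑ i : Fin N → ι, P i * B := by
        rw [← Finset.sum_mul, hP1, one_mul]
      rw [hB']
      refine Finset.sum_lt_sum (fun i _ => mul_le_mul_of_nonneg_left (h i).le (hP0 i))
        ⟨i₀, Finset.mem_univ i₀, ?_⟩
      exact mul_lt_mul_of_pos_left (h i₀) hi₀pos
    exact absurd hEbound (not_le.mpr hlt)
  obtain ⟨i₀, hi₀⟩ := hexist
  refine ⟨i₀, ?_⟩
  have heq : c - (N : ℝ)⁻¹ • S i₀ = (N : ℝ)⁻¹ • ((N : ℝ) • c - S i₀) := by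
    rw [smul_sub, smul_smul, inv_mul_cancel₀ (by exact_mod_cast hN.ne'), one_smul]
  have hSi : (∑ k, z (i₀ k)) = S i₀ := rfl
  rw [hSi, heq, norm_smul, Real.norm_eq_abs, abs_of_nonneg (by positivity)]
  have hfin : (N : ℝ)⁻¹ * B = 2 * C * K / Real.sqrt N := by
    have hNpos : (0 : ℝ) < (N : ℝ) := by exact_mod_cast hN
    have hss : Real.sqrt N * Real.sqrt N = (N : ℝ) := Real.mul_self_sqrt (Nat.cast_nonneg N)
    rw [hB, eq_div_iff hsqN.ne']
    calc (N : ℝ)⁻¹ * (2 * C * K * Real.sqrt N) * Real.sqrt N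
        = 2 * C * K * (Real.sqrt N * Real.sqrt N * (N : ℝ)⁻¹) := by ring
      _ = 2 * C * K := by rw [hss, mul_inv_cancel₀ hNpos.ne', mul_one]
  calc (N : ℝ)⁻¹ * ‖(N : ℝ) • c - S i₀‖
      ≤ (N : ℝ)⁻¹ * B := by
        refine mul_le_mul_of_nonneg_left hi₀ (by positivity)
    _ = 2 * C * K / Real.sqrt N := hfin

end MaureyCore

/-- Maurey's sampling argument: `N`-term approximation rate `N^{-1/2}` for functions in
the variation space of a bounded dictionary, in a Banach space of Rademacher type 2. -/
theorem maurey_sampling (X : Type*) [NormedAddCommGroup X] [NormedSpace ℝ X] [CompleteSpace X]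
    (C : ℝ) (hC : 0 < C)
    (htype2 : ∀ (N : ℕ) (f : Fin N → X),
      (∑ σ : Fin N → Bool, ((2 : ℝ) ^ N)⁻¹ *
          ‖∑ i, (if σ i then (1 : ℝ) else -1) • f i‖ ^ 2) ^ ((1 : ℝ) / 2) ≤
        C * (∑ i, ‖f i‖ ^ 2) ^ ((1 : ℝ) / 2))
    (D : Set X) (K : ℝ) (hK : ∀ g ∈ D, ‖g‖ ≤ K)
    (f : X) (hf : {t : ℝ | 0 < t ∧ t⁻¹ • f ∈ symHull D}.Nonempty)
    (N : ℕ) (hN : 0 < N) :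
    sInf {e : ℝ | ∃ (a : Fin N → ℝ) (g : Fin N → X), (∀ i, g i ∈ D) ∧
        (∑ i, |a i|) ≤ varNorm D f ∧ e = ‖f - ∑ i, a i • g i‖} ≤
      4 * C * K * varNorm D f * (N : ℝ) ^ (-(1 : ℝ) / 2) := by
  classical
  set M := varNorm D f with hM
  have hbddS : BddBelow {t : ℝ | 0 < t ∧ t⁻¹ • f ∈ symHull D} :=
    ⟨0, fun t ht => ht.1.le⟩
  have hM0 : 0 ≤ M := Real.sInf_nonneg fun t ht => ht.1.le
  have hDne : D.Nonempty := by
    by_contra h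
    rw [Set.not_nonempty_iff_eq_empty] at h
    obtain ⟨t, ht⟩ := hf
    have := ht.2
    rw [h] at this
    simp [symHull] at this
  have hK0 : 0 ≤ K := by
    obtain ⟨g₀, hg₀⟩ := hDne
    exact (norm_nonneg g₀).trans (hK g₀ hg₀)
  have hNpos : (0 : ℝ) < (N : ℝ) := by exact_mod_cast hN
  have hsqN : (0 : ℝ) < Real.sqrt N := Real.sqrt_pos.mpr hNpos
  have hrpow : (N : ℝ) ^ (-(1 : ℝ) / 2) = (Real.sqrt N)⁻¹ := by
    rw [neg_div, Real.rpow_neg (Nat.cast_nonneg N), ← Real.sqrt_eq_rpow]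
  refine le_of_forall_pos_le_add fun ε hε => ?_
  set Q : ℝ := 2 * C * K / Real.sqrt N + K + 1 with hQ
  have hnn : 0 ≤ 2 * C * K / Real.sqrt N :=
    div_nonneg (mul_nonneg (by linarith) hK0) hsqN.le
  have hQpos : 0 < Q := by rw [hQ]; linarith
  set δ : ℝ := min 1 (ε / 3 / Q) with hδ
  have hδpos : 0 < δ := lt_min one_pos (div_pos (by linarith) hQpos)
  have hδQ : δ * Q ≤ ε / 3 := by
    have h1 : δ ≤ ε / 3 / Q := min_le_right _ _
    calc δ * Q ≤ (ε / 3 / Q) * Q := mul_le_mul_of_nonneg_right h1 hQpos.le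
      _ = ε / 3 := div_mul_cancel₀ _ hQpos.ne'
  obtain ⟨t, htS, htlt⟩ := Real.lt_sInf_add_pos hf hδpos
  obtain ⟨ht0, hcl⟩ := htS
  have hMt : M ≤ t := csInf_le hbddS ⟨ht0, hcl⟩
  -- approximate t⁻¹ • f by a convex combination c
  obtain ⟨c, hcH, hdist⟩ := Metric.mem_closure_iff.mp hcl (ε / 3 / t) (by positivity)
  obtain ⟨ι, hft, w, zf, hw0, hw1, hzD, hzc⟩ := mem_convexHull_iff_exists_fintype.mp hcH
  letI := hft
  -- decompose dictionary elements with signs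
  have hdecomp : ∀ j : ι, ∃ (s : ℝ) (g : X), g ∈ D ∧ zf j = s • g ∧ |s| = 1 := by
    intro j
    rcases hzD j with h | ⟨g, hg, hgz⟩
    · exact ⟨1, zf j, h, (one_smul ℝ _).symm, abs_one⟩
    · refine ⟨-1, g, hg, ?_, by simp⟩
      rw [← hgz]
      simp
  choose sfn gfn hgD' hzfs habs1 using hdecomp
  have hznorm : ∀ j, ‖zf j‖ ≤ K := by
    intro j
    rw [hzfs j, norm_smul, Real.norm_eq_abs, habs1 j, one_mul]
    exact hK _ (hgD' j)
  -- sample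
  obtain ⟨i, hi⟩ := maurey_core C K hC.le hK0 hN (htype2 N) w zf hw0 hw1 hznorm
  rw [hzc] at hi
  set a : Fin N → ℝ := fun k => (M / N) * sfn (i k) with ha
  set g : Fin N → X := fun k => gfn (i k) with hg
  set v : X := ∑ k, zf (i k) with hv
  have hgD : ∀ k, g k ∈ D := fun k => hgD' (i k)
  have hsuma : (∑ k, |a k|) ≤ M := by
    have h1 : ∀ k : Fin N, |a k| = M / N := by
      intro k
      rw [ha]
      simp only
      rw [abs_mul, habs1 (i k), mul_one,
        abs_of_nonneg (div_nonneg hM0 (Nat.cast_nonneg N))]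
    rw [Finset.sum_congr rfl fun k _ => h1 k, Finset.sum_const]
    simp only [Finset.card_univ, Fintype.card_fin, nsmul_eq_mul]
    rw [mul_div_cancel₀ _ hNpos.ne']
  have hag : (∑ k, a k • g k) = (M / N) • v := by
    rw [hv, Finset.smul_sum]
    refine Finset.sum_congr rfl fun k _ => ?_
    rw [ha, hg]
    simp only
    rw [mul_smul, ← hzfs (i k)]
  have hvnorm : ‖v‖ ≤ (N : ℝ) * K := by
    refine (norm_sum_le _ _).trans ?_
    calc (∑ k : Fin N, ‖zf (i k)‖) ≤ ∑ _k : Fin N, K :=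
          Finset.sum_le_sum fun k _ => hznorm (i k)
      _ = (N : ℝ) * K := by rw [Finset.sum_const]; simp [nsmul_eq_mul]
  -- decompose the error
  have hkey : f - ∑ k, a k • g k
      = (f - t • c) + t • (c - (N : ℝ)⁻¹ • v) + ((t - M) / N) • v := by
    rw [hag]
    have h1 : t • (c - (N : ℝ)⁻¹ • v) = t • c - (t / N) • v := by
      rw [smul_sub, smul_smul, div_eq_mul_inv]
    have h2 : ((t - M) / N) • v = (t / N) • v - (M / N) • v := by
      rw [← sub_smul, sub_div]
    rw [h1, h2]
    abel
  have hn1 : ‖f - t • c‖ ≤ ε / 3 := by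
    have heq : f - t • c = t • (t⁻¹ • f - c) := by
      rw [smul_sub, smul_smul, mul_inv_cancel₀ ht0.ne', one_smul]
    rw [heq, norm_smul, Real.norm_eq_abs, abs_of_pos ht0]
    have hd : ‖t⁻¹ • f - c‖ < ε / 3 / t := by
      rw [← dist_eq_norm]
      exact hdist
    calc t * ‖t⁻¹ • f - c‖ ≤ t * (ε / 3 / t) :=
          mul_le_mul_of_nonneg_left hd.le ht0.le
      _ = ε / 3 := by rw [mul_comm]; exact div_mul_cancel₀ _ ht0.ne'
  have hn2 : ‖t • (c - (N : ℝ)⁻¹ • v)‖ ≤ t * (2 * C * K / Real.sqrt N) := by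
    rw [norm_smul, Real.norm_eq_abs, abs_of_pos ht0]
    exact mul_le_mul_of_nonneg_left hi ht0.le
  have hn3 : ‖((t - M) / N) • v‖ ≤ δ * K := by
    rw [norm_smul, Real.norm_eq_abs,
      abs_of_nonneg (div_nonneg (by linarith) (Nat.cast_nonneg N))]
    calc ((t - M) / N) * ‖v‖ ≤ ((t - M) / N) * ((N : ℝ) * K) :=
          mul_le_mul_of_nonneg_left hvnorm (div_nonneg (by linarith) (Nat.cast_nonneg N))
      _ = (t - M) * K := by field_simp
      _ ≤ δ * K := by
          refine mul_le_mul_of_nonneg_right ?_ hK0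
          have h' : t < M + δ := htlt
          linarith
  have herr : ‖f - ∑ k, a k • g k‖ ≤ 2 * C * K * M / Real.sqrt N + 2 * ε / 3 := by
    rw [hkey]
    have htri : ‖(f - t • c) + t • (c - (N : ℝ)⁻¹ • v) + ((t - M) / N) • v‖ ≤
        ‖f - t • c‖ + ‖t • (c - (N : ℝ)⁻¹ • v)‖ + ‖((t - M) / N) • v‖ :=
      norm_add₃_le
    refine htri.trans ?_
    have ht2 : t * (2 * C * K / Real.sqrt N) ≤
        M * (2 * C * K / Real.sqrt N) + δ * (2 * C * K / Real.sqrt N) := by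
      have htM : t ≤ M + δ := by
        have h' : t < M + δ := htlt
        linarith
      have hpos : 0 ≤ 2 * C * K / Real.sqrt N := hnn
      calc t * (2 * C * K / Real.sqrt N) ≤ (M + δ) * (2 * C * K / Real.sqrt N) :=
            mul_le_mul_of_nonneg_right htM hpos
        _ = M * (2 * C * K / Real.sqrt N) + δ * (2 * C * K / Real.sqrt N) := by ring
    have hδtot : δ * (2 * C * K / Real.sqrt N) + δ * K ≤ ε / 3 := by
      have : δ * (2 * C * K / Real.sqrt N) + δ * K ≤ δ * Q := by
        rw [hQ]
        nlinarith [hδpos.le]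
      linarith [hδQ]
    have hM2 : M * (2 * C * K / Real.sqrt N) = 2 * C * K * M / Real.sqrt N := by ring
    linarith [hn1, hn2, hn3]
  -- conclude
  have hmem : ‖f - ∑ k, a k • g k‖ ∈ {e : ℝ | ∃ (a : Fin N → ℝ) (g : Fin N → X),
      (∀ i, g i ∈ D) ∧ (∑ i, |a i|) ≤ varNorm D f ∧ e = ‖f - ∑ i, a i • g i‖} :=
    ⟨a, g, hgD, by rw [← hM]; exact hsuma, rfl⟩
  have hbddE : BddBelow {e : ℝ | ∃ (a : Fin N → ℝ) (g : Fin N → X),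
      (∀ i, g i ∈ D) ∧ (∑ i, |a i|) ≤ varNorm D f ∧ e = ‖f - ∑ i, a i • g i‖} := by
    refine ⟨0, fun e he => ?_⟩
    obtain ⟨a', g', _, _, rfl⟩ := he
    exact norm_nonneg _
  have hfinal : 2 * C * K * M / Real.sqrt N ≤ 4 * C * K * M * (N : ℝ) ^ (-(1 : ℝ) / 2) := by
    rw [hrpow]
    have h1 : 0 ≤ C * K * M * (Real.sqrt N)⁻¹ :=
      mul_nonneg (mul_nonneg (mul_nonneg hC.le hK0) hM0) (inv_nonneg.mpr hsqN.le)
    have h2 : 2 * C * K * M / Real.sqrt N = 2 * (C * K * M * (Real.sqrt N)⁻¹) := by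
      rw [div_eq_mul_inv]; ring
    have h3 : 4 * C * K * M * (Real.sqrt N)⁻¹ = 4 * (C * K * M * (Real.sqrt N)⁻¹) := by ring
    rw [h2, h3]
    linarith
  calc sInf {e : ℝ | ∃ (a : Fin N → ℝ) (g : Fin N → X), (∀ i, g i ∈ D) ∧
        (∑ i, |a i|) ≤ varNorm D f ∧ e = ‖f - ∑ i, a i • g i‖}
      ≤ ‖f - ∑ k, a k • g k‖ := csInf_le hbddE hmem
    _ ≤ 2 * C * K * M / Real.sqrt N + 2 * ε / 3 := herr
    _ ≤ 4 * C * K * M * (N : ℝ) ^ (-(1 : ℝ) / 2) + ε := by linarith [hfinal, hε]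
    _ = 4 * C * K * varNorm D f * (N : ℝ) ^ (-(1 : ℝ) / 2) + ε := by rw [← hM]
end
end

section
/- Let b ∈ ℝ, τ ≠ 0, ξ ∈ ℝ^d with ξ ≠ 0, and define h(t) = ⟨t⟩ · ⟨|ξ|t/τ + b⟩ for t ∈ ℝ, where ⟨x⟩ = 1 + |x|. Then min_{t ∈ ℝ} h(t) = 1 + min(1, |τ|/|ξ|)·|b|; in particular h(t) ≥ 1 + min(1, |τ|/|ξ|)|b| for all t ∈ ℝ. -/
/-!
With `a = ‖ξ‖/τ`, the function is `(1 + |t|)(1 + |a t + b|) ≥ 1 + |t| + |a t + b|`, and the triangle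
inequality `|b| ≤ |a t + b| + |a||t|` scaled by `m = min 1 |a|⁻¹` (so that `m ≤ 1` and `m|a| ≤ 1`)
gives `m|b| ≤ |t| + |a t + b|`. The bound `1 + m|b| = min (1 + |b|) (1 + |b|/|a|)` is attained at
`t = 0` or at the zero `t = -b/a` of the affine factor.
-/

open Real

lemma min_one_inv_abs_mul_abs_le (a b t : ℝ) : min 1 |a|⁻¹ * |b| ≤ |t| + |a * t + b| := by
  set m := min 1 |a|⁻¹
  have hm_nonneg : 0 ≤ m := le_min zero_le_one (inv_nonneg.2 (abs_nonneg a))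
  have hm_le_one : m ≤ 1 := min_le_left _ _
  have hma_le_one : m * |a| ≤ 1 := by
    refine (mul_le_mul_of_nonneg_right (min_le_right _ _) (abs_nonneg a)).trans ?_
    rcases eq_or_ne a 0 with rfl | ha
    · simp
    · rw [inv_mul_cancel₀ (abs_ne_zero.2 ha)]
  have htri : |b| ≤ |a * t + b| + |a| * |t| := by
    calc |b| = |(a * t + b) - a * t| := by ring_nf
      _ ≤ |a * t + b| + |a * t| := abs_sub _ _
      _ = |a * t + b| + |a| * |t| := by rw [abs_mul]
  calc m * |b| ≤ m * (|a * t + b| + |a| * |t|) := mul_le_mul_of_nonneg_left htri hm_nonneg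
    _ = m * |a * t + b| + m * |a| * |t| := by ring
    _ ≤ |a * t + b| + |t| :=
      add_le_add (mul_le_of_le_one_left (abs_nonneg _) hm_le_one)
        (mul_le_of_le_one_left (abs_nonneg _) hma_le_one)
    _ = |t| + |a * t + b| := add_comm _ _

theorem isLeast_range_one_add_abs_mul_one_add_abs_affine {a : ℝ} (ha : a ≠ 0) (b : ℝ) :
    IsLeast (Set.range fun t : ℝ => (1 + |t|) * (1 + |a * t + b|)) (1 + min 1 |a|⁻¹ * |b|) := by
  refine ⟨?_, ?_⟩
  · rw [min_mul_of_nonneg _ _ (abs_nonneg b), one_mul, ← min_add_add_left]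
    rcases min_choice (1 + |b|) (1 + |a|⁻¹ * |b|) with h | h <;> rw [h]
    · exact ⟨0, by simp⟩
    · refine ⟨-b / a, ?_⟩
      have hzero : a * (-b / a) + b = 0 := by field_simp; ring
      simp only [hzero, abs_zero, add_zero, mul_one, abs_div, abs_neg]
      ring
  · rintro _ ⟨t, rfl⟩
    nlinarith [min_one_inv_abs_mul_abs_le a b t, mul_nonneg (abs_nonneg t) (abs_nonneg (a * t + b))]

/-- The minimum of `h(t) = (1+|t|)(1+||ξ|t/τ + b|)` over `t ∈ ℝ` equals
`1 + min(1, |τ|/|ξ|)·|b|`. -/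
theorem min_of_bracket_product (d : ℕ) (b τ : ℝ) (hτ : τ ≠ 0)
    (ξ : EuclideanSpace ℝ (Fin d)) (hξ : ξ ≠ 0) :
    IsLeast (Set.range fun t : ℝ => (1 + |t|) * (1 + |‖ξ‖ * t / τ + b|))
      (1 + min 1 (|τ| / ‖ξ‖) * |b|) := by
  have hnorm : 0 < ‖ξ‖ := norm_pos_iff.2 hξ
  have hslope : |‖ξ‖ / τ|⁻¹ = |τ| / ‖ξ‖ := by rw [abs_div, abs_of_pos hnorm, inv_div]
  have h := isLeast_range_one_add_abs_mul_one_add_abs_affine (div_ne_zero hnorm.ne' hτ) b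
  rw [hslope] at h
  simpa only [mul_div_right_comm] using h
end

section
/- Let d ∈ ℕ, r > 1, u, p with (u − r)p > d. Then for all ξ ∈ ℝ^d \ {0}, b ∈ ℝ, τ ≠ 0, and any v ≥ r: ‖ ⟨t⟩^{(d−1)/p − u} ⟨|ξ|t/τ + b⟩^{−v} ‖_{L^p(ℝ, dt)} ≤ (2/((u−r)p − d))^{1/p} · (1 + min(1, |τ|/|ξ|)|b|)^{−r}. -/
open MeasureTheory Real

theorem aux_shift_integral (s : ℝ) :
    (∫ x in Set.Ioi (0:ℝ), (1 + x) ^ (-s)) = ∫ x in Set.Ioi (1:ℝ), x ^ (-s) := by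
  have hmp : MeasurePreserving (fun x : ℝ => x + 1) volume volume :=
    measurePreserving_add_right volume 1
  have hemb : MeasurableEmbedding (fun x : ℝ => x + 1) :=
    (MeasurableEquiv.addRight (1:ℝ)).measurableEmbedding
  have := hmp.setIntegral_preimage_emb hemb (fun x : ℝ => x ^ (-s)) (Set.Ioi 1)
  have hpre : (fun x : ℝ => x + 1) ⁻¹' Set.Ioi 1 = Set.Ioi 0 := by
    ext x; simp only [Set.mem_preimage, Set.mem_Ioi]; constructor <;> intro hx <;> linarith
  rw [hpre] at this
  rw [← this]
  refine setIntegral_congr_fun measurableSet_Ioi (fun x _ => ?_)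
  rw [add_comm]

/-- Weighted `L^p(ℝ)` bound for the product of Japanese brackets:
`‖⟨t⟩^{(d−1)/p − u} ⟨|ξ|t/τ + b⟩^{−v}‖_{L^p} ≤ (2/((u−r)p − d))^{1/p} (1 + min(1,|τ|/|ξ|)|b|)^{−r}`. -/
theorem bracket_product_Lp_bound (d : ℕ) (u p r v : ℝ) (hp : 0 < p) (hr : 1 < r)
    (hv : r ≤ v) (h : (d : ℝ) < (u - r) * p)
    (ξ : EuclideanSpace ℝ (Fin d)) (hξ : ξ ≠ 0) (b τ : ℝ) (hτ : τ ≠ 0) :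
    (∫ t : ℝ, ((1 + |t|) ^ (((d : ℝ) - 1) / p - u) *
        (1 + |‖ξ‖ * t / τ + b|) ^ (-v)) ^ p) ^ (1 / p) ≤
      (2 / ((u - r) * p - d)) ^ (1 / p) * (1 + min 1 (|τ| / ‖ξ‖) * |b|) ^ (-r) := by
  have hξ' : 0 < ‖ξ‖ := norm_pos_iff.mpr hξ
  have hτ' : 0 < |τ| := abs_pos.mpr hτ
  set M : ℝ := 1 + min 1 (|τ| / ‖ξ‖) * |b| with hMdef
  have hc0 : 0 ≤ min 1 (|τ| / ‖ξ‖) := le_min zero_le_one (by positivity)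
  have hM1 : 1 ≤ M := by
    have : 0 ≤ min 1 (|τ| / ‖ξ‖) * |b| := mul_nonneg hc0 (abs_nonneg b)
    simp only [hMdef]; linarith
  have hM0 : 0 < M := lt_of_lt_of_le one_pos hM1
  set s : ℝ := (u - r) * p - ((d : ℝ) - 1) with hsdef
  have hs1 : 1 < s := by simp only [hsdef]; linarith
  -- key pointwise inequality: M ≤ (1+|t|)(1+|‖ξ‖t/τ+b|)
  have key : ∀ t : ℝ, M ≤ (1 + |t|) * (1 + |‖ξ‖ * t / τ + b|) := by
    intro t
    set B := |‖ξ‖ * t / τ + b| with hBdef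
    have hB0 : 0 ≤ B := abs_nonneg _
    have habs : |‖ξ‖ * t / τ| = ‖ξ‖ * |t| / |τ| := by
      rw [abs_div, abs_mul, abs_norm]
    have hb : |b| ≤ ‖ξ‖ * |t| / |τ| + B := by
      have h5 := abs_sub_abs_le_abs_sub b (‖ξ‖ * t / τ + b)
      have h2 : |b - (‖ξ‖ * t / τ + b)| = |‖ξ‖ * t / τ| := by
        rw [show b - (‖ξ‖ * t / τ + b) = -(‖ξ‖ * t / τ) by ring, abs_neg]
      rw [h2, habs] at h5
      linarith
    have h1 : min 1 (|τ| / ‖ξ‖) * |b| ≤ |t| + B := by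
      have hcb : min 1 (|τ| / ‖ξ‖) * |b| ≤
          min 1 (|τ| / ‖ξ‖) * (‖ξ‖ * |t| / |τ|) + min 1 (|τ| / ‖ξ‖) * B := by
        rw [← mul_add]; exact mul_le_mul_of_nonneg_left hb hc0
      have h3 : min 1 (|τ| / ‖ξ‖) * (‖ξ‖ * |t| / |τ|) ≤ |t| := by
        calc min 1 (|τ| / ‖ξ‖) * (‖ξ‖ * |t| / |τ|)
            ≤ (|τ| / ‖ξ‖) * (‖ξ‖ * |t| / |τ|) :=
              mul_le_mul_of_nonneg_right (min_le_right _ _) (by positivity)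
          _ = |t| := by field_simp
      have h4 : min 1 (|τ| / ‖ξ‖) * B ≤ B :=
        mul_le_of_le_one_left hB0 (min_le_left _ _)
      linarith
    have ht0 : 0 ≤ |t| := abs_nonneg t
    simp only [hMdef]
    nlinarith [mul_nonneg ht0 hB0]
  -- pointwise bound on the integrand
  have pt : ∀ t : ℝ, ((1 + |t|) ^ (((d : ℝ) - 1) / p - u) *
      (1 + |‖ξ‖ * t / τ + b|) ^ (-v)) ^ p ≤ (1 + |t|) ^ (-s) * M ^ (-(r * p)) := by
    intro t
    set A := 1 + |t| with hAdef
    set B := 1 + |‖ξ‖ * t / τ + b| with hBdef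
    have hA1 : 1 ≤ A := by simp [hAdef, abs_nonneg]
    have hB1 : 1 ≤ B := by simp [hBdef, abs_nonneg]
    have hA0 : 0 < A := lt_of_lt_of_le one_pos hA1
    have hB0 : 0 < B := lt_of_lt_of_le one_pos hB1
    have step1 : A ^ (((d : ℝ) - 1) / p - u) * B ^ (-v) ≤
        A ^ (((d : ℝ) - 1) / p - u + r) * M ^ (-r) := by
      have hBv : B ^ (-v) ≤ B ^ (-r) :=
        rpow_le_rpow_of_exponent_le hB1 (by linarith)
      have hAB : (A * B) ^ (-r) ≤ M ^ (-r) :=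
        rpow_le_rpow_of_nonpos hM0 (key t) (by linarith)
      have expand : A ^ (((d : ℝ) - 1) / p - u) * B ^ (-r) =
          A ^ (((d : ℝ) - 1) / p - u + r) * (A * B) ^ (-r) := by
        rw [mul_rpow hA0.le hB0.le, ← mul_assoc, ← rpow_add hA0,
          show ((d : ℝ) - 1) / p - u + r + -r = ((d : ℝ) - 1) / p - u by ring]
      calc A ^ (((d : ℝ) - 1) / p - u) * B ^ (-v)
          ≤ A ^ (((d : ℝ) - 1) / p - u) * B ^ (-r) :=
            mul_le_mul_of_nonneg_left hBv (rpow_nonneg hA0.le _)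
        _ = A ^ (((d : ℝ) - 1) / p - u + r) * (A * B) ^ (-r) := expand
        _ ≤ A ^ (((d : ℝ) - 1) / p - u + r) * M ^ (-r) :=
            mul_le_mul_of_nonneg_left hAB (rpow_nonneg hA0.le _)
    have hnn : 0 ≤ A ^ (((d : ℝ) - 1) / p - u) * B ^ (-v) :=
      mul_nonneg (rpow_nonneg hA0.le _) (rpow_nonneg hB0.le _)
    have hexp : (((d : ℝ) - 1) / p - u + r) * p = -s := by
      simp only [hsdef]; field_simp; ring
    calc (A ^ (((d : ℝ) - 1) / p - u) * B ^ (-v)) ^ p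
        ≤ (A ^ (((d : ℝ) - 1) / p - u + r) * M ^ (-r)) ^ p :=
          rpow_le_rpow hnn step1 hp.le
      _ = A ^ (-s) * M ^ (-(r * p)) := by
          rw [mul_rpow (rpow_nonneg hA0.le _) (rpow_nonneg hM0.le _),
            ← rpow_mul hA0.le, ← rpow_mul hM0.le, hexp, neg_mul]
  -- integrability of the majorant
  have hints : Integrable (fun t : ℝ => (1 + |t|) ^ (-s)) := by
    have := integrable_one_add_norm (E := ℝ) (μ := volume) (r := s)
      (by simpa using hs1)
    simpa [Real.norm_eq_abs] using this
  have hintg : Integrable (fun t : ℝ => (1 + |t|) ^ (-s) * M ^ (-(r * p))) :=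
    hints.mul_const _
  have hle : (∫ t : ℝ, ((1 + |t|) ^ (((d : ℝ) - 1) / p - u) *
      (1 + |‖ξ‖ * t / τ + b|) ^ (-v)) ^ p) ≤
      ∫ t : ℝ, (1 + |t|) ^ (-s) * M ^ (-(r * p)) := by
    refine integral_mono_of_nonneg (Filter.Eventually.of_forall fun t => ?_) hintg
      (Filter.Eventually.of_forall pt)
    have : (0:ℝ) < 1 + |t| := by positivity
    have : (0:ℝ) < 1 + |‖ξ‖ * t / τ + b| := by positivity
    positivity
  have hI : (∫ t : ℝ, (1 + |t|) ^ (-s)) = 2 / (s - 1) := by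
    have h2 : (∫ t : ℝ, (1 + |t|) ^ (-s)) = 2 * ∫ x in Set.Ioi (0:ℝ), (1 + x) ^ (-s) :=
      integral_comp_abs (f := fun x => (1 + x) ^ (-s))
    rw [h2, aux_shift_integral, integral_Ioi_rpow_of_lt (by linarith) one_pos, one_rpow]
    have hne : (-s:ℝ) + 1 ≠ 0 := by intro hc; linarith
    have hne2 : (s:ℝ) - 1 ≠ 0 := by intro hc; linarith
    field_simp
    ring
  have hsd : s - 1 = (u - r) * p - d := by simp only [hsdef]; ring
  have hIg : (∫ t : ℝ, (1 + |t|) ^ (-s) * M ^ (-(r * p))) =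
      (2 / ((u - r) * p - d)) * M ^ (-(r * p)) := by
    rw [integral_mul_const, hI, hsd]
  have lhs_nonneg : 0 ≤ ∫ t : ℝ, ((1 + |t|) ^ (((d : ℝ) - 1) / p - u) *
      (1 + |‖ξ‖ * t / τ + b|) ^ (-v)) ^ p := by
    refine integral_nonneg fun t => ?_
    have : (0:ℝ) < 1 + |t| := by positivity
    have : (0:ℝ) < 1 + |‖ξ‖ * t / τ + b| := by positivity
    positivity
  have hD : (0:ℝ) < (u - r) * p - d := by linarith
  calc (∫ t : ℝ, ((1 + |t|) ^ (((d : ℝ) - 1) / p - u) *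
        (1 + |‖ξ‖ * t / τ + b|) ^ (-v)) ^ p) ^ (1 / p)
      ≤ ((2 / ((u - r) * p - d)) * M ^ (-(r * p))) ^ (1 / p) :=
        rpow_le_rpow lhs_nonneg (hle.trans_eq hIg) (by positivity)
    _ = (2 / ((u - r) * p - d)) ^ (1 / p) * M ^ (-r) := by
        have hrp : -(r * p) * (1 / p) = -r := by field_simp
        rw [mul_rpow (by positivity) (rpow_nonneg hM0.le _), ← rpow_mul hM0.le, hrp]
end

section
/- Let r > 1, τ ≠ 0. For ξ ∈ ℝ^d and b ∈ ℝ define φ(ξ,b) = ⟨b⟩^r ⟨ξ⟩^{−r} (1 + min(1, |τ|/|ξ|)|b|)^{−r} (with min(1,|τ|/|ξ|) := 1 when ξ = 0). Then sup_{ξ,b} φ(ξ,b) ≤ max(1, |τ|^{−r}); in particular φ is uniformly bounded by min(1,|τ|)^{−r}. -/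
open Real
open scoped Classical

/-- Uniform bound on `φ(ξ,b) = ⟨b⟩^r ⟨ξ⟩^{−r} (1 + min(1,|τ|/|ξ|)|b|)^{−r}`
(with the convention `min(1,|τ|/|ξ|) = 1` when `ξ = 0`). -/
theorem dictionary_weight_bounded (d : ℕ) (r τ : ℝ) (hr : 1 < r) (hτ : τ ≠ 0) :
    ∀ (ξ : EuclideanSpace ℝ (Fin d)) (b : ℝ),
      (1 + |b|) ^ r * (1 + ‖ξ‖) ^ (-r) *
          (1 + (if ξ = 0 then 1 else min 1 (|τ| / ‖ξ‖)) * |b|) ^ (-r) ≤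
        max 1 (|τ| ^ (-r)) ∧
      (1 + |b|) ^ r * (1 + ‖ξ‖) ^ (-r) *
          (1 + (if ξ = 0 then 1 else min 1 (|τ| / ‖ξ‖)) * |b|) ^ (-r) ≤
        (min 1 |τ|) ^ (-r) := by
  intro ξ b
  have hτ' : (0:ℝ) < |τ| := abs_pos.mpr hτ
  have hr0 : (0:ℝ) < r := lt_trans one_pos hr
  set m : ℝ := if ξ = 0 then 1 else min 1 (|τ| / ‖ξ‖) with hm
  have hb : (0:ℝ) ≤ |b| := abs_nonneg b
  have hξ : (0:ℝ) ≤ ‖ξ‖ := norm_nonneg ξ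
  have hm0 : 0 ≤ m := by
    rw [hm]; split
    · norm_num
    · exact le_min one_pos.le (div_nonneg hτ'.le hξ)
  set M : ℝ := max 1 (|τ|⁻¹) with hM
  have hM1 : (1:ℝ) ≤ M := le_max_left _ _
  have hMτ : (1:ℝ) ≤ M * |τ| := by
    have : |τ|⁻¹ ≤ M := le_max_right _ _
    calc (1:ℝ) = |τ|⁻¹ * |τ| := by field_simp
    _ ≤ M * |τ| := by nlinarith
  have key : 1 + |b| ≤ M * ((1 + ‖ξ‖) * (1 + m * |b|)) := by
    rcases le_or_gt ‖ξ‖ |τ| with h | h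
    · have hm1 : m = 1 := by
        rw [hm]; split
        · rfl
        · rename_i h0
          have hξp : 0 < ‖ξ‖ := norm_pos_iff.mpr h0
          exact min_eq_left ((one_le_div hξp).mpr h)
      rw [hm1, one_mul]
      have h1 : 1 + |b| ≤ (1 + ‖ξ‖) * (1 + |b|) := by nlinarith [mul_nonneg hξ hb]
      have h2 : (1 + ‖ξ‖) * (1 + |b|) ≤ M * ((1 + ‖ξ‖) * (1 + |b|)) :=
        le_mul_of_one_le_left (by nlinarith [mul_nonneg hξ hb]) hM1
      linarith
    · have h0 : ξ ≠ 0 := by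
        intro h0; rw [h0] at h; simp at h; exact absurd h (not_lt.mpr hτ'.le)
      have hξp : 0 < ‖ξ‖ := lt_trans hτ' h
      have hm' : m = |τ| / ‖ξ‖ := by
        rw [hm, if_neg h0]
        exact min_eq_right ((div_le_one hξp).mpr h.le)
      have hmm : m * ‖ξ‖ = |τ| := by rw [hm']; field_simp
      have hexp : (1 + ‖ξ‖) * (1 + m * |b|) = 1 + ‖ξ‖ + m * |b| + |τ| * |b| := by
        have : ‖ξ‖ * (m * |b|) = |τ| * |b| := by
          rw [← mul_assoc, mul_comm ‖ξ‖ m, hmm]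
        ring_nf
        nlinarith [this]
      rw [hexp]
      nlinarith [mul_nonneg hm0 hb, hMτ, hM1, hb, hξ,
        mul_le_mul_of_nonneg_right hMτ hb]
  have hA : (0:ℝ) < 1 + |b| := by linarith
  have hB1 : (0:ℝ) < 1 + ‖ξ‖ := by linarith
  have hB2 : (0:ℝ) < 1 + m * |b| := by nlinarith
  have hB : (0:ℝ) < (1 + ‖ξ‖) * (1 + m * |b|) := mul_pos hB1 hB2
  have hMpos : (0:ℝ) < M := lt_of_lt_of_le one_pos hM1
  -- raise to the power r
  have step : (1 + |b|) ^ r ≤ M ^ r * ((1 + ‖ξ‖) * (1 + m * |b|)) ^ r := by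
    calc (1 + |b|) ^ r ≤ (M * ((1 + ‖ξ‖) * (1 + m * |b|))) ^ r :=
          Real.rpow_le_rpow hA.le key hr0.le
    _ = M ^ r * ((1 + ‖ξ‖) * (1 + m * |b|)) ^ r :=
          Real.mul_rpow hMpos.le hB.le
  have main : (1 + |b|) ^ r * (1 + ‖ξ‖) ^ (-r) * (1 + m * |b|) ^ (-r) ≤ M ^ r := by
    rw [Real.rpow_neg hB1.le, Real.rpow_neg hB2.le]
    rw [mul_assoc, ← mul_inv, ← Real.mul_rpow hB1.le hB2.le]
    rw [← div_eq_mul_inv, div_le_iff₀ (Real.rpow_pos_of_pos hB r)]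
    exact step
  have hMr : M ^ r ≤ max 1 (|τ| ^ (-r)) := by
    rcases max_cases (1:ℝ) (|τ|⁻¹) with ⟨he, _⟩ | ⟨he, _⟩
    · rw [hM, he, Real.one_rpow]; exact le_max_left _ _
    · rw [hM, he, ← Real.rpow_neg_one, ← Real.rpow_mul hτ'.le, neg_one_mul]
      exact le_max_right _ _
  have first : (1 + |b|) ^ r * (1 + ‖ξ‖) ^ (-r) * (1 + m * |b|) ^ (-r)
      ≤ max 1 (|τ| ^ (-r)) := main.trans hMr
  have hmin : max 1 (|τ| ^ (-r)) ≤ (min 1 |τ|) ^ (-r) := by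
    have hminpos : (0:ℝ) < min 1 |τ| := lt_min one_pos hτ'
    apply max_le
    · calc (1:ℝ) = 1 ^ (-r) := (Real.one_rpow _).symm
      _ ≤ (min 1 |τ|) ^ (-r) :=
        Real.rpow_le_rpow_of_nonpos hminpos (min_le_left _ _) (by linarith)
    · exact Real.rpow_le_rpow_of_nonpos hminpos (min_le_right _ _) (by linarith)
  exact ⟨first, first.trans hmin⟩
end
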